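/- Let G be a finite simple graph and M a maximum matching of G such that G has no bad vertices with respect to M. Then for every edge uv ∈ M, at most one of u and v is adjacent to some vertex not covered by M; that is, it cannot happen that u is adjacent to a vertex x not covered by M and v is adjacent to a vertex y not covered by M. -/

import Mathlib

open SimpleGraph

/-- A total cover of a simple graph `G`: a pair of a vertex set `SV` and an edge set
`SE ⊆ E(G)` such that every vertex not in `SV` is adjacent to a vertex of `SV` or is an
endpoint of an edge of `SE`, and every edge not in `SE` has an endpoint in `SV` or shares
an endpoint with an edge of `SE`. -/
def IsTotalCover {V : Type*} (G : SimpleGraph V) (SV : Set V) (SE : Set (Sym2 V)) : Prop :=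
  SE ⊆ G.edgeSet ∧
  (∀ v : V, v ∉ SV → (∃ u ∈ SV, G.Adj v u) ∨ (∃ e ∈ SE, v ∈ e)) ∧
  (∀ e ∈ G.edgeSet, e ∉ SE → (∃ v ∈ SV, v ∈ e) ∨ (∃ f ∈ SE, ∃ v : V, v ∈ e ∧ v ∈ f))

/-- A matching of `G`: a set of edges of `G` that are pairwise vertex-disjoint. -/
def IsMatchingSet {V : Type*} (G : SimpleGraph V) (M : Set (Sym2 V)) : Prop :=
  M ⊆ G.edgeSet ∧ ∀ e ∈ M, ∀ f ∈ M, e ≠ f → ∀ v : V, v ∈ e → v ∉ f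

/-- A maximum matching of `G`: a matching of largest cardinality. -/
def IsMaximumMatching {V : Type*} (G : SimpleGraph V) (M : Set (Sym2 V)) : Prop :=
  IsMatchingSet G M ∧ ∀ M' : Set (Sym2 V), IsMatchingSet G M' → M'.ncard ≤ M.ncard

/-- A vertex is covered by a matching `M` if it is an endpoint of some edge of `M`. -/
def CoveredBy {V : Type*} (M : Set (Sym2 V)) (v : V) : Prop :=
  ∃ e ∈ M, v ∈ e

/-- A bad vertex with respect to a matching `M`: a vertex not covered by `M` which is
adjacent to both endpoints of some edge of `M`. -/
def IsBad {V : Type*} (G : SimpleGraph V) (M : Set (Sym2 V)) (w : V) : Prop :=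
  ¬ CoveredBy M w ∧ ∃ u v : V, s(u, v) ∈ M ∧ G.Adj w u ∧ G.Adj w v

/-- An isolated vertex: a vertex of degree 0, i.e. adjacent to no vertex. -/
def IsIsolated {V : Type*} (G : SimpleGraph V) (v : V) : Prop :=
  ∀ u : V, ¬ G.Adj v u

/-- The total graph `T(G)` of `G`: its vertices are the vertices and edges of `G`, with
adjacency given by adjacency/incidence in `G`. -/
def totalGraph {V : Type*} (G : SimpleGraph V) : SimpleGraph (V ⊕ G.edgeSet) where
  Adj x y :=
    match x, y with
    | .inl a, .inl b => G.Adj a b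
    | .inl a, .inr e => a ∈ e.1
    | .inr e, .inl a => a ∈ e.1
    | .inr e, .inr f => e ≠ f ∧ ∃ v : V, v ∈ e.1 ∧ v ∈ f.1
  symm := by
    constructor
    rintro (a | e) (b | f) h
    · exact G.adj_symm h
    · exact h
    · exact h
    · exact ⟨h.1.symm, by obtain ⟨v, h1, h2⟩ := h.2; exact ⟨v, h2, h1⟩⟩
  loopless := by
    constructor
    rintro (a | e) h
    · exact G.loopless.irrefl a h
    · exact h.1 rfl

/-
Replacing `uv` by `ux` and `vy` turns the path `x u v y` into a larger matching, so maximality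
forces `x = y`; but then `x` is adjacent to both ends of `uv`, i.e. `x` is bad.
-/

section Matching

variable {V : Type*} {G : SimpleGraph V} {M : Set (Sym2 V)}

theorem coveredBy_of_mem {e : Sym2 V} {w : V} (he : e ∈ M) (hw : w ∈ e) : CoveredBy M w :=
  ⟨e, he, hw⟩

theorem coveredBy_insert_mk_iff {a b w : V} :
    CoveredBy (insert s(a, b) M) w ↔ w = a ∨ w = b ∨ CoveredBy M w := by
  simp [CoveredBy, or_assoc]

theorem IsMatchingSet.eq_of_mem_of_mem (hM : IsMatchingSet G M) {e f : Sym2 V} (he : e ∈ M)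
    (hf : f ∈ M) {w : V} (hwe : w ∈ e) (hwf : w ∈ f) : e = f := by
  by_contra hne
  exact hM.2 e he f hf hne w hwe hwf

theorem isMatchingSet_of_eq_of_mem_of_mem (hsub : M ⊆ G.edgeSet)
    (heq : ∀ e ∈ M, ∀ f ∈ M, ∀ w : V, w ∈ e → w ∈ f → e = f) : IsMatchingSet G M :=
  ⟨hsub, fun e he f hf hne w hwe hwf => hne (heq e he f hf w hwe hwf)⟩

theorem IsMatchingSet.mono {N : Set (Sym2 V)} (hM : IsMatchingSet G M) (hNM : N ⊆ M) :
    IsMatchingSet G N :=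
  isMatchingSet_of_eq_of_mem_of_mem (hNM.trans hM.1)
    fun _ he _ hf _ hwe hwf => hM.eq_of_mem_of_mem (hNM he) (hNM hf) hwe hwf

theorem IsMatchingSet.not_coveredBy_diff_singleton (hM : IsMatchingSet G M) {e : Sym2 V}
    (he : e ∈ M) {w : V} (hw : w ∈ e) : ¬ CoveredBy (M \ {e}) w := by
  rintro ⟨f, ⟨hf, hfe⟩, hwf⟩
  exact hfe (hM.eq_of_mem_of_mem hf he hwf hw)

theorem IsMatchingSet.insert_mk (hM : IsMatchingSet G M) {a b : V} (hab : G.Adj a b)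
    (ha : ¬ CoveredBy M a) (hb : ¬ CoveredBy M b) : IsMatchingSet G (insert s(a, b) M) := by
  have hnew : ∀ f ∈ M, ∀ w : V, w ∈ s(a, b) → w ∉ f := by
    intro f hf w hw hwf
    rcases Sym2.mem_iff.1 hw with rfl | rfl
    exacts [ha (coveredBy_of_mem hf hwf), hb (coveredBy_of_mem hf hwf)]
  refine isMatchingSet_of_eq_of_mem_of_mem (Set.insert_subset_iff.2 ⟨hab, hM.1⟩) ?_
  rintro e (rfl | he) f (rfl | hf) w hwe hwf
  · rfl
  · exact absurd hwf (hnew f hf w hwe)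
  · exact absurd hwe (hnew e he w hwf)
  · exact hM.eq_of_mem_of_mem he hf hwe hwf

theorem ncard_insert_mk_of_not_coveredBy (hM : M.Finite) {a b : V} (ha : ¬ CoveredBy M a) :
    (insert s(a, b) M).ncard = M.ncard + 1 :=
  Set.ncard_insert_of_notMem (fun h => ha (coveredBy_of_mem h (Sym2.mem_mk_left a b))) hM

theorem IsMatchingSet.exists_ncard_eq_add_one_of_augmenting_path (hM : IsMatchingSet G M)
    (hfin : M.Finite) {u v x y : V} (huv : s(u, v) ∈ M) (hx : ¬ CoveredBy M x)
    (hy : ¬ CoveredBy M y) (hxy : x ≠ y) (hux : G.Adj u x) (hvy : G.Adj v y) :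
    ∃ M' : Set (Sym2 V), IsMatchingSet G M' ∧ M'.ncard = M.ncard + 1 := by
  set M₀ := M \ {s(u, v)}
  have hM₀ : IsMatchingSet G M₀ := hM.mono Set.sdiff_subset
  have hu₀ := hM.not_coveredBy_diff_singleton huv (Sym2.mem_mk_left u v)
  have hv₀ := hM.not_coveredBy_diff_singleton huv (Sym2.mem_mk_right u v)
  have hx₀ : ¬ CoveredBy M₀ x := fun ⟨e, he, hxe⟩ => hx ⟨e, he.1, hxe⟩
  have hy₀ : ¬ CoveredBy M₀ y := fun ⟨e, he, hye⟩ => hy ⟨e, he.1, hye⟩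
  have hu₁ : ¬ CoveredBy (insert s(v, y) M₀) u := by
    rw [coveredBy_insert_mk_iff]
    rintro (rfl | rfl | h)
    exacts [G.loopless.irrefl _ (hM.1 huv), hy (coveredBy_of_mem huv (Sym2.mem_mk_left _ _)),
      hu₀ h]
  have hx₁ : ¬ CoveredBy (insert s(v, y) M₀) x := by
    rw [coveredBy_insert_mk_iff]
    rintro (rfl | rfl | h)
    exacts [hx (coveredBy_of_mem huv (Sym2.mem_mk_right _ _)), hxy rfl, hx₀ h]
  refine ⟨insert s(u, x) (insert s(v, y) M₀),
    (hM₀.insert_mk hvy hv₀ hy₀).insert_mk hux hu₁ hx₁, ?_⟩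
  have hfin₀ : M₀.Finite := hfin.sdiff
  rw [ncard_insert_mk_of_not_coveredBy (hfin₀.insert _) hu₁,
    ncard_insert_mk_of_not_coveredBy hfin₀ hv₀, Set.ncard_sdiff_singleton_add_one huv hfin]

end Matching

/-- if `G` has no bad vertices with respect to a maximum matching `M`,
then for every edge `uv ∈ M` at most one of `u` and `v` is adjacent to a vertex not
covered by `M`. -/
theorem stmt_10 {V : Type*} [Fintype V] (G : SimpleGraph V)
    (M : Set (Sym2 V)) (hM : IsMaximumMatching G M)
    (hbad : ∀ w : V, ¬ IsBad G M w)
    (u v : V) (huv : s(u, v) ∈ M) :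
    ¬ ((∃ x : V, ¬ CoveredBy M x ∧ G.Adj u x) ∧
       (∃ y : V, ¬ CoveredBy M y ∧ G.Adj v y)) := by
  rintro ⟨⟨x, hx, hux⟩, ⟨y, hy, hvy⟩⟩
  have hxy : x ≠ y := by
    rintro rfl
    exact hbad x ⟨hx, u, v, huv, hux.symm, hvy.symm⟩
  obtain ⟨M', hM', hcard⟩ :=
    hM.1.exists_ncard_eq_add_one_of_augmenting_path M.toFinite huv hx hy hxy hux hvy
  have := hM.2 M' hM'
  omega
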